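/- arXiv:0709.0597 — 6 statements merged into one kernel-verified Lean document; each statement's English description precedes it below -/
import Mathlib

section
/- Let n1, n2, n3 be positive natural numbers with n1 ≥ n2. Then 2·n1·n2·n3 − (n1+n2)·n3 − 2·(n1+n2) = 0 if and only if (n1,n2,n3) is one of the six triples (2,1,6), (2,2,2), (3,1,4), (3,3,1), (5,1,3), (6,2,1). -/
/-!
Cleared of denominators, the relation is `2abc = (a + b)(c + 2)`, i.e.
`2 = (1/a + 1/b)(1 + 2/c)`. As `a ≥ b`, the first factor is at most `2/b` and the second at
most `3`, so `b ≤ 3`; unless `a = b = 1` the first factor is at most `3/2`, so `c ≤ 6`.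
For each of the remaining values of `b` and `c` the relation is linear in `a`.
-/

theorem pv_relation_iff (a b c : ℕ) :
    2 * (a : ℤ) * b * c - (a + b) * c - 2 * (a + b) = 0 ↔ 2 * a * b * c = (a + b) * (c + 2) := by
  rw [← Int.natCast_inj, sub_sub, sub_eq_zero]
  push_cast
  constructor <;> intro h <;> linarith

theorem le_three_of_pv_relation {a b c : ℕ} (hb : 0 < b) (hba : b ≤ a)
    (h : 2 * a * b * c = (a + b) * (c + 2)) : b ≤ 3 := by
  have hbc : b * c ≤ c + 2 := by
    have : 2 * a * (b * c) ≤ 2 * a * (c + 2) :=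
      calc 2 * a * (b * c) = (a + b) * (c + 2) := by rw [← h]; ring
        _ ≤ 2 * a * (c + 2) := by nlinarith
    exact Nat.le_of_mul_le_mul_left this (by omega)
  have hc : 0 < c := Nat.pos_of_ne_zero fun hc0 => by
    rw [hc0, mul_zero] at h
    omega
  nlinarith

theorem le_six_of_pv_relation {a b c : ℕ} (hb : 0 < b) (hba : b ≤ a)
    (h : 2 * a * b * c = (a + b) * (c + 2)) : c ≤ 6 := by
  rcases Nat.lt_or_ge a 2 with ha | ha
  · obtain rfl : a = 1 := by omega
    obtain rfl : b = 1 := by omega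
    omega
  · have hab : 2 * (a + b) ≤ 3 * a * b := by nlinarith
    nlinarith

theorem pv_eigenvalue_classification_general (n1 n2 n3 : ℕ)
    (h2 : 0 < n2) (h12 : n2 ≤ n1) :
    (2 * (n1 : ℤ) * (n2 : ℤ) * (n3 : ℤ) - ((n1 : ℤ) + (n2 : ℤ)) * (n3 : ℤ)
        - 2 * ((n1 : ℤ) + (n2 : ℤ)) = 0) ↔
      ((n1, n2, n3) = (2, 1, 6) ∨ (n1, n2, n3) = (2, 2, 2) ∨ (n1, n2, n3) = (3, 1, 4) ∨
        (n1, n2, n3) = (3, 3, 1) ∨ (n1, n2, n3) = (5, 1, 3) ∨ (n1, n2, n3) = (6, 2, 1)) := by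
  rw [pv_relation_iff]
  simp only [Prod.mk.injEq]
  constructor
  · intro h
    have hn2 := le_three_of_pv_relation h2 h12 h
    have hn3 := le_six_of_pv_relation h2 h12 h
    interval_cases n2 <;> interval_cases n3 <;> omega
  · rintro (h | h | h | h | h | h) <;> obtain ⟨rfl, rfl, rfl⟩ := h <;> rfl

/-- Classification of positive natural number solutions of
`2·n1·n2·n3 − (n1+n2)·n3 − 2·(n1+n2) = 0` with `n1 ≥ n2`
(eigenvalue relation of the generalized Painlevé V system). -/
theorem pv_eigenvalue_classification (n1 n2 n3 : ℕ)
    (h1 : 0 < n1) (h2 : 0 < n2) (h3 : 0 < n3) (h12 : n2 ≤ n1) :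
    (2 * (n1 : ℤ) * (n2 : ℤ) * (n3 : ℤ) - ((n1 : ℤ) + (n2 : ℤ)) * (n3 : ℤ)
        - 2 * ((n1 : ℤ) + (n2 : ℤ)) = 0) ↔
      ((n1, n2, n3) = (2, 1, 6) ∨ (n1, n2, n3) = (2, 2, 2) ∨ (n1, n2, n3) = (3, 1, 4) ∨
        (n1, n2, n3) = (3, 3, 1) ∨ (n1, n2, n3) = (5, 1, 3) ∨ (n1, n2, n3) = (6, 2, 1)) :=
  pv_eigenvalue_classification_general n1 n2 n3 h2 h12
end

section
/- Let t, a1, a3, a9, a10 ∈ ℂ and n1, n2, n3, n4 ∈ ℂ with t ≠ 0, t ≠ 1, a1 ≠ 0 and n1, n2, n3, n4 all nonzero. Assume: (i) t·a1 = n1·(−a10); (ii) (1−t)·a1 = n2·(−a10 − a9 − a3); (iii) t(t−1)·a1 = n3·(−a10 − t·a9 − t²·a3); (iv) n4·(2·a1 + a3) = a1. Then 1/n1 + 1/n2 + 1/n3 + 1/n4 = 2. -/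
/-!
Each condition expresses `1 / nᵢ` as an explicit quotient of the coefficients. After
multiplying by `a1`, the partial fraction decomposition `1 / (t (t - 1)) = 1 / (t - 1) - 1 / t`
makes the contributions of `a10` and `a9` cancel and those of `a3` sum to zero, leaving `2 a1`.
-/

theorem one_div_eq_div_of_eq_mul {K : Type*} [Field K] {c n b : K} (hc : c ≠ 0)
    (h : c = n * b) : 1 / n = b / c := by
  have hn : n ≠ 0 := by
    rintro rfl
    exact hc (by simpa using h)
  rw [div_eq_div_iff hn hc, h]
  ring

theorem pvi_eigenvalue_quotients_sum {K : Type*} [Field K] {t a1 a3 a9 a10 : K}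
    (ht0 : t ≠ 0) (ht1 : t ≠ 1) (ha1 : a1 ≠ 0) :
    -a10 / (t * a1) + (-a10 - a9 - a3) / ((1 - t) * a1)
      + (-a10 - t * a9 - t ^ 2 * a3) / (t * (t - 1) * a1) + (2 * a1 + a3) / a1 = 2 := by
  have ht1' : t - 1 ≠ 0 := sub_ne_zero.2 ht1
  have ht1'' : 1 - t ≠ 0 := sub_ne_zero.2 ht1.symm
  field_simp
  ring

theorem pvi_eigenvalue_relation_general (t a1 a3 a9 a10 n1 n2 n3 n4 : ℂ)
    (ht0 : t ≠ 0) (ht1 : t ≠ 1) (ha1 : a1 ≠ 0)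
    (e1 : t * a1 = n1 * (-a10))
    (e2 : (1 - t) * a1 = n2 * (-a10 - a9 - a3))
    (e3 : t * (t - 1) * a1 = n3 * (-a10 - t * a9 - t ^ 2 * a3))
    (e4 : n4 * (2 * a1 + a3) = a1) :
    1 / n1 + 1 / n2 + 1 / n3 + 1 / n4 = 2 := by
  have ht1' : t - 1 ≠ 0 := sub_ne_zero.2 ht1
  rw [one_div_eq_div_of_eq_mul (mul_ne_zero ht0 ha1) e1,
    one_div_eq_div_of_eq_mul (mul_ne_zero (sub_ne_zero.2 ht1.symm) ha1) e2,
    one_div_eq_div_of_eq_mul (mul_ne_zero (mul_ne_zero ht0 ht1') ha1) e3,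
    one_div_eq_div_of_eq_mul ha1 e4.symm]
  exact pvi_eigenvalue_quotients_sum ht0 ht1 ha1

/-- The eigenvalue relation `1/n1 + 1/n2 + 1/n3 + 1/n4 = 2` for the generalized
Painlevé VI system, derived from the eigenvalue conditions at the accessible
singular points `X = 0, 1, t, ∞`. -/
theorem pvi_eigenvalue_relation (t a1 a3 a9 a10 n1 n2 n3 n4 : ℂ)
    (ht0 : t ≠ 0) (ht1 : t ≠ 1) (ha1 : a1 ≠ 0)
    (hn1 : n1 ≠ 0) (hn2 : n2 ≠ 0) (hn3 : n3 ≠ 0) (hn4 : n4 ≠ 0)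
    (e1 : t * a1 = n1 * (-a10))
    (e2 : (1 - t) * a1 = n2 * (-a10 - a9 - a3))
    (e3 : t * (t - 1) * a1 = n3 * (-a10 - t * a9 - t ^ 2 * a3))
    (e4 : n4 * (2 * a1 + a3) = a1) :
    1 / n1 + 1 / n2 + 1 / n3 + 1 / n4 = 2 :=
  pvi_eigenvalue_relation_general t a1 a3 a9 a10 n1 n2 n3 n4 ht0 ht1 ha1 e1 e2 e3 e4
end

section
/- Let n1,n2,n3,n4,α0,α1,α2,α3,α4 ∈ ℂ with each n_i ≠ 0, 1/n1+1/n2+1/n3+1/n4 = 2, δ ≠ 0 and 2n1n2n3−n1n2−n1n3−n2n3 ≠ 0. Let U ⊆ ℂ be open with 0,1 ∉ U, and let x, y : ℂ → ℂ be differentiable on U with y(t) ≠ 0 for all t ∈ U, satisfying the generalized Painlevé VI system with parameters (n1,n2,n3,n4; α0,α1,α2,α3,α4) on U. Then the functions x̃ := x + α2/y and ỹ := y satisfy the generalized Painlevé VI system on U with parameters (n1,n2,n3,n4; α0+α2−n3α2, ((2n1n2n3−n1n2−n1n3−n2n3)α1+(n1n2n3−n1n2−n1n3−n2n3)α2)/(2n1n2n3−n1n2−n1n3−n2n3),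 −α2, α3+α2−n2α2, α4+α2−n1α2), provided the quantity δ formed from these new parameters is nonzero. -/
/-- The constant `δ` of the generalized Painlevé VI system. -/
noncomputable def pviDelta (n1 n2 n3 b0 b1 b2 b3 b4 : ℂ) : ℂ :=
  n1 * n2 * b0 + (2 * n1 * n2 * n3 - n1 * n2 - n1 * n3 - n2 * n3) * b1
    - n1 * n2 * n3 * b2 + n1 * n3 * b3 + n2 * n3 * b4

/-- `x, y : ℂ → ℂ` are differentiable on `U` and satisfy the generalized
Painlevé VI system with parameters `(n1,n2,n3,n4; b0,b1,b2,b3,b4)` on `U`. -/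
def PVISystem (n1 n2 n3 n4 b0 b1 b2 b3 b4 : ℂ) (U : Set ℂ) (x y : ℂ → ℂ) : Prop :=
  DifferentiableOn ℂ x U ∧ DifferentiableOn ℂ y U ∧
  ∀ t ∈ U,
    (pviDelta n1 n2 n3 b0 b1 b2 b3 b4 * (t * (t - 1)) * deriv x t =
      n1 * n2 * n3 * x t * (x t - 1) * (t - x t) * y t
      + ((2 * n1 * n2 * n3 - n1 * n2 - n1 * n3 - n2 * n3) * b1 - n1 * n2 * n3 * b2) * (x t) ^ 2
      + (-(2 * n1 * n2 * n3 - n1 * n2 - n1 * n3 - n2 * n3) * b1 + n1 * n2 * n3 * b2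
          + n1 * n3 * b3 * (t - 1) + n2 * n3 * b4 * t) * x t
      - n2 * n3 * b4 * t)
    ∧
    (pviDelta n1 n2 n3 b0 b1 b2 b3 b4 * (t * (t - 1)) * deriv y t =
      ((n1 * n2 + n2 * n3 + n1 * n3) * (x t) ^ 2
          - (n1 * n2 + n2 * n3 + (n1 + n2) * n3 * t) * x t + n2 * n3 * t) * (y t) ^ 2
      + (-(2 * (2 * n1 * n2 * n3 - n1 * n2 - n1 * n3 - n2 * n3) * b1
            + (-2 * n1 * n2 - 2 * n1 * n3 - 2 * n2 * n3 + n1 * n2 * n3) * b2) * x t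
          + (-(n1 * n2) - n1 * n3 - n2 * n3 + 2 * n1 * n2 * n3) * b1
          + ((n1 * n2 - n1 - n2) * n3 * t - n1 * n2 - n2 * n3) * b2
          - n1 * n3 * b3 * (t - 1) - n2 * n3 * b4 * t) * y t
      - b2 * ((-(n1 * n2) - n1 * n3 - n2 * n3 + 2 * n1 * n2 * n3) * b1
          + (-(n1 * n2) - n1 * n3 - n2 * n3 + n1 * n2 * n3) * b2))

/-! The map `(x, y) ↦ (x + α₂/y, y)` leaves `y` and `δ` unchanged, and differentiating `α₂/y`
contributes `-α₂ y'/y²`. So the new `x`-equation is the old `x`-equation minus `α₂/y²` times the old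
`y`-equation, and the new `y`-equation is the old one: after the parameter shift, both are polynomial
identities in `x`, `y`, `1/y`. The new `α₁` only ever occurs multiplied by `2n₁n₂n₃ - n₁n₂ - n₁n₃ - n₂n₃`,
so it is handled in that division-free form. -/

section RightHandSides

variable {K : Type*} [Field K]

def pviRhsX (n1 n2 n3 b1 b2 b3 b4 t x y : K) : K :=
  n1 * n2 * n3 * x * (x - 1) * (t - x) * y
    + ((2 * n1 * n2 * n3 - n1 * n2 - n1 * n3 - n2 * n3) * b1 - n1 * n2 * n3 * b2) * x ^ 2
    + (-(2 * n1 * n2 * n3 - n1 * n2 - n1 * n3 - n2 * n3) * b1 + n1 * n2 * n3 * b2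
        + n1 * n3 * b3 * (t - 1) + n2 * n3 * b4 * t) * x
    - n2 * n3 * b4 * t

def pviRhsY (n1 n2 n3 b1 b2 b3 b4 t x y : K) : K :=
  ((n1 * n2 + n2 * n3 + n1 * n3) * x ^ 2
      - (n1 * n2 + n2 * n3 + (n1 + n2) * n3 * t) * x + n2 * n3 * t) * y ^ 2
    + (-(2 * (2 * n1 * n2 * n3 - n1 * n2 - n1 * n3 - n2 * n3) * b1
          + (-2 * n1 * n2 - 2 * n1 * n3 - 2 * n2 * n3 + n1 * n2 * n3) * b2) * x
        + (-(n1 * n2) - n1 * n3 - n2 * n3 + 2 * n1 * n2 * n3) * b1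
        + ((n1 * n2 - n1 - n2) * n3 * t - n1 * n2 - n2 * n3) * b2
        - n1 * n3 * b3 * (t - 1) - n2 * n3 * b4 * t) * y
    - b2 * ((-(n1 * n2) - n1 * n3 - n2 * n3 + 2 * n1 * n2 * n3) * b1
        + (-(n1 * n2) - n1 * n3 - n2 * n3 + n1 * n2 * n3) * b2)

variable {n1 n2 n3 b1 b2 b3 b4 b1' t x y : K}

theorem pviRhsY_symmetry_s (hy : y ≠ 0)
    (hb1 : (2 * n1 * n2 * n3 - n1 * n2 - n1 * n3 - n2 * n3) * b1'
      = (2 * n1 * n2 * n3 - n1 * n2 - n1 * n3 - n2 * n3) * b1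
        + (n1 * n2 * n3 - n1 * n2 - n1 * n3 - n2 * n3) * b2) :
    pviRhsY n1 n2 n3 b1' (-b2) (b3 + b2 - n2 * b2) (b4 + b2 - n1 * b2) t (x + b2 / y) y
      = pviRhsY n1 n2 n3 b1 b2 b3 b4 t x y := by
  unfold pviRhsY
  field_simp
  linear_combination (y - 2 * x * y - b2) * hb1

theorem pviRhsX_symmetry_s (hy : y ≠ 0)
    (hb1 : (2 * n1 * n2 * n3 - n1 * n2 - n1 * n3 - n2 * n3) * b1'
      = (2 * n1 * n2 * n3 - n1 * n2 - n1 * n3 - n2 * n3) * b1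
        + (n1 * n2 * n3 - n1 * n2 - n1 * n3 - n2 * n3) * b2) :
    pviRhsX n1 n2 n3 b1' (-b2) (b3 + b2 - n2 * b2) (b4 + b2 - n1 * b2) t (x + b2 / y) y
      = pviRhsX n1 n2 n3 b1 b2 b3 b4 t x y - b2 * pviRhsY n1 n2 n3 b1 b2 b3 b4 t x y / y ^ 2 := by
  unfold pviRhsX pviRhsY
  field_simp
  linear_combination ((x * y + b2) ^ 2 - (x * y + b2) * y) * hb1

end RightHandSides

theorem pviDelta_symmetry_s {n1 n2 n3 b0 b1 b2 b3 b4 b1' : ℂ}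
    (hb1 : (2 * n1 * n2 * n3 - n1 * n2 - n1 * n3 - n2 * n3) * b1'
      = (2 * n1 * n2 * n3 - n1 * n2 - n1 * n3 - n2 * n3) * b1
        + (n1 * n2 * n3 - n1 * n2 - n1 * n3 - n2 * n3) * b2) :
    pviDelta n1 n2 n3 (b0 + b2 - n3 * b2) b1' (-b2) (b3 + b2 - n2 * b2) (b4 + b2 - n1 * b2)
      = pviDelta n1 n2 n3 b0 b1 b2 b3 b4 := by
  unfold pviDelta
  linear_combination hb1

theorem pviSystem_iff {n1 n2 n3 n4 b0 b1 b2 b3 b4 : ℂ} {U : Set ℂ} {x y : ℂ → ℂ} :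
    PVISystem n1 n2 n3 n4 b0 b1 b2 b3 b4 U x y ↔
      DifferentiableOn ℂ x U ∧ DifferentiableOn ℂ y U ∧ ∀ t ∈ U,
        pviDelta n1 n2 n3 b0 b1 b2 b3 b4 * (t * (t - 1)) * deriv x t
            = pviRhsX n1 n2 n3 b1 b2 b3 b4 t (x t) (y t) ∧
          pviDelta n1 n2 n3 b0 b1 b2 b3 b4 * (t * (t - 1)) * deriv y t
            = pviRhsY n1 n2 n3 b1 b2 b3 b4 t (x t) (y t) :=
  Iff.rfl

theorem deriv_add_const_div {𝕜 : Type*} [NontriviallyNormedField 𝕜] {x y : 𝕜 → 𝕜} {t : 𝕜}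
    (hx : DifferentiableAt 𝕜 x t) (hy : DifferentiableAt 𝕜 y t) (hyt : y t ≠ 0) (a : 𝕜) :
    deriv (fun s => x s + a / y s) t = deriv x t - a * deriv y t / y t ^ 2 := by
  have hdiv := (hasDerivAt_const t a).fun_div hy.hasDerivAt hyt
  rw [(hx.hasDerivAt.fun_add hdiv).deriv]
  ring

theorem pvi_symmetry_s_general (n1 n2 n3 n4 a0 a1 a2 a3 a4 : ℂ)
    (hC : 2 * n1 * n2 * n3 - n1 * n2 - n1 * n3 - n2 * n3 ≠ 0)
    (U : Set ℂ) (hU : IsOpen U)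
    (x y : ℂ → ℂ) (hy : ∀ t ∈ U, y t ≠ 0)
    (hxy : PVISystem n1 n2 n3 n4 a0 a1 a2 a3 a4 U x y) :
    PVISystem n1 n2 n3 n4 (a0 + a2 - n3 * a2)
      (((2 * n1 * n2 * n3 - n1 * n2 - n1 * n3 - n2 * n3) * a1
          + (n1 * n2 * n3 - n1 * n2 - n1 * n3 - n2 * n3) * a2)
        / (2 * n1 * n2 * n3 - n1 * n2 - n1 * n3 - n2 * n3))
      (-a2) (a3 + a2 - n2 * a2) (a4 + a2 - n1 * a2) U
      (fun t => x t + a2 / y t) y := by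
  obtain ⟨hxd, hyd, hode⟩ := pviSystem_iff.mp hxy
  have hb1 := mul_div_cancel₀
    ((2 * n1 * n2 * n3 - n1 * n2 - n1 * n3 - n2 * n3) * a1
      + (n1 * n2 * n3 - n1 * n2 - n1 * n3 - n2 * n3) * a2) hC
  refine pviSystem_iff.mpr ⟨hxd.add ((differentiableOn_const a2).div hyd hy), hyd, fun t ht => ?_⟩
  obtain ⟨hx', hy'⟩ := hode t ht
  have hyt := hy t ht
  rw [pviDelta_symmetry_s hb1, pviRhsX_symmetry_s hyt hb1, pviRhsY_symmetry_s hyt hb1, ← hx', ← hy',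
    deriv_add_const_div (hxd.differentiableAt (hU.mem_nhds ht))
      (hyd.differentiableAt (hU.mem_nhds ht)) hyt]
  exact ⟨by ring, rfl⟩

/-- Birational symmetry `s` of the generalized Painlevé VI system:
`(x, y) ↦ (x + α2/y, y)` with the indicated parameter change. -/
theorem pvi_symmetry_s (n1 n2 n3 n4 a0 a1 a2 a3 a4 : ℂ)
    (hn1 : n1 ≠ 0) (hn2 : n2 ≠ 0) (hn3 : n3 ≠ 0) (hn4 : n4 ≠ 0)
    (hsum : 1 / n1 + 1 / n2 + 1 / n3 + 1 / n4 = 2)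
    (hδ : pviDelta n1 n2 n3 a0 a1 a2 a3 a4 ≠ 0)
    (hC : 2 * n1 * n2 * n3 - n1 * n2 - n1 * n3 - n2 * n3 ≠ 0)
    (U : Set ℂ) (hU : IsOpen U) (h0U : (0 : ℂ) ∉ U) (h1U : (1 : ℂ) ∉ U)
    (x y : ℂ → ℂ) (hy : ∀ t ∈ U, y t ≠ 0)
    (hxy : PVISystem n1 n2 n3 n4 a0 a1 a2 a3 a4 U x y)
    (hδ' : pviDelta n1 n2 n3 (a0 + a2 - n3 * a2)
        (((2 * n1 * n2 * n3 - n1 * n2 - n1 * n3 - n2 * n3) * a1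
            + (n1 * n2 * n3 - n1 * n2 - n1 * n3 - n2 * n3) * a2)
          / (2 * n1 * n2 * n3 - n1 * n2 - n1 * n3 - n2 * n3))
        (-a2) (a3 + a2 - n2 * a2) (a4 + a2 - n1 * a2) ≠ 0) :
    PVISystem n1 n2 n3 n4 (a0 + a2 - n3 * a2)
      (((2 * n1 * n2 * n3 - n1 * n2 - n1 * n3 - n2 * n3) * a1
          + (n1 * n2 * n3 - n1 * n2 - n1 * n3 - n2 * n3) * a2)
        / (2 * n1 * n2 * n3 - n1 * n2 - n1 * n3 - n2 * n3))
      (-a2) (a3 + a2 - n2 * a2) (a4 + a2 - n1 * a2) U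
      (fun t => x t + a2 / y t) y :=
  pvi_symmetry_s_general n1 n2 n3 n4 a0 a1 a2 a3 a4 hC U hU x y hy hxy
end

section
/- Let n1,n2,n3,n4,α0,α1,α2,α3,α4 ∈ ℂ with each n_i ≠ 0, 1/n1+1/n2+1/n3+1/n4 = 2 and δ ≠ 0. Let U ⊆ ℂ be open with 0,1 ∉ U, and let x, y : ℂ → ℂ be differentiable on U satisfying the generalized Painlevé VI system with parameters (n1,n2,n3,n4; α0,α1,α2,α3,α4) on U. Then the functions x̃(t) := 1 − x(1−t) and ỹ(t) := −y(1−t) satisfy the generalized Painlevé VI system on the set {t : 1−t ∈ U} with parameters (n2,n1,n3,n4; α0,α1,α2,α4,α3), provided the quantity δ formed from these new parameters is nonzero. -/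
/-!
The substitution `t ↦ 1 - t` fixes the factor `t (t - 1)` and reverses the sign of
derivatives, while `x ↦ 1 - x`, `y ↦ -y` reverse it once more. Exchanging `n1 ↔ n2` and
`α3 ↔ α4` leaves `δ` unchanged, so each equation of the transformed system at `t` is a
polynomial rearrangement of the corresponding original equation at `1 - t`.
-/

theorem pviDelta_swap (n1 n2 n3 b0 b1 b2 b3 b4 : ℂ) :
    pviDelta n2 n1 n3 b0 b1 b2 b4 b3 = pviDelta n1 n2 n3 b0 b1 b2 b3 b4 := by
  unfold pviDelta
  ring

theorem DifferentiableOn.comp_const_sub {𝕜 F : Type*} [NontriviallyNormedField 𝕜]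
    [NormedAddCommGroup F] [NormedSpace 𝕜 F] {f : 𝕜 → F} {s : Set 𝕜}
    (hf : DifferentiableOn 𝕜 f s) (a : 𝕜) :
    DifferentiableOn 𝕜 (fun t => f (a - t)) {t | a - t ∈ s} :=
  hf.comp (differentiableOn_id.const_sub a) fun _ ht => ht

theorem pvi_symmetry_pi1_general (n1 n2 n3 n4 a0 a1 a2 a3 a4 : ℂ)
    (U : Set ℂ)
    (x y : ℂ → ℂ)
    (hxy : PVISystem n1 n2 n3 n4 a0 a1 a2 a3 a4 U x y) :
    PVISystem n2 n1 n3 n4 a0 a1 a2 a4 a3 {t : ℂ | 1 - t ∈ U}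
      (fun t => 1 - x (1 - t)) (fun t => -y (1 - t)) := by
  obtain ⟨hx, hy, hsys⟩ := hxy
  refine ⟨(hx.comp_const_sub 1).const_sub 1, (hy.comp_const_sub 1).neg, fun t ht => ?_⟩
  obtain ⟨hdx, hdy⟩ := hsys (1 - t) ht
  simp only [deriv_const_sub, deriv.fun_neg, deriv_comp_const_sub, pviDelta_swap]
  constructor
  · linear_combination hdx
  · linear_combination hdy

/-- Birational symmetry `π₁` of the generalized Painlevé VI system:
`x̃(t) = 1 − x(1−t)`, `ỹ(t) = −y(1−t)`, with parameters `(n2,n1,n3,n4; α0,α1,α2,α4,α3)`. -/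
theorem pvi_symmetry_pi1 (n1 n2 n3 n4 a0 a1 a2 a3 a4 : ℂ)
    (hn1 : n1 ≠ 0) (hn2 : n2 ≠ 0) (hn3 : n3 ≠ 0) (hn4 : n4 ≠ 0)
    (hsum : 1 / n1 + 1 / n2 + 1 / n3 + 1 / n4 = 2)
    (hδ : pviDelta n1 n2 n3 a0 a1 a2 a3 a4 ≠ 0)
    (U : Set ℂ) (hU : IsOpen U) (h0U : (0 : ℂ) ∉ U) (h1U : (1 : ℂ) ∉ U)
    (x y : ℂ → ℂ)
    (hxy : PVISystem n1 n2 n3 n4 a0 a1 a2 a3 a4 U x y)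
    (hδ' : pviDelta n2 n1 n3 a0 a1 a2 a4 a3 ≠ 0) :
    PVISystem n2 n1 n3 n4 a0 a1 a2 a4 a3 {t : ℂ | 1 - t ∈ U}
      (fun t => 1 - x (1 - t)) (fun t => -y (1 - t)) :=
  pvi_symmetry_pi1_general n1 n2 n3 n4 a0 a1 a2 a3 a4 U x y hxy
end

section
/- Let t0, α4, C1, C2 ∈ ℂ with t0 ≠ 1, and let U ⊆ ℂ be open such that T + (t0−1)·C1 ≠ 0 for all T ∈ U. Define W(T) := T/(t0−1) + C1 and Z(T) := C2·(T+(t0−1)·C1)² + α4·(T+(t0−1)·C1)/(t0−1). Then W(T) ≠ 0 on U, and (Z, W) satisfies on U the reduced system dZ/dT = (1/W)·((2/(t0−1))·Z − (α4/(t0−1))·W) and dW/dT = (1/W)·((1/(t0−1))·W). -/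
/-! With `c = t0 - 1` and `A = T + c·C1` one has `W = A / c` and `Z = C2·A² + α4·A / c`, so
`W` is nonzero exactly where `A` is, and both equations of the system become rational
identities in `A` whose only denominators are `c` and `A`. -/

section Field

variable {𝕜 : Type*} [Field 𝕜] {c C₁ T : 𝕜}

theorem div_add_eq_add_mul_div (hc : c ≠ 0) : T / c + C₁ = (T + c * C₁) / c := by
  field_simp

theorem div_add_ne_zero (hc : c ≠ 0) (hA : T + c * C₁ ≠ 0) : T / c + C₁ ≠ 0 := by
  rw [div_add_eq_add_mul_div hc]
  exact div_ne_zero hA hc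

theorem reduced_system_rhs_z_eq (C₂ α₄ : 𝕜) (hc : c ≠ 0) (hA : T + c * C₁ ≠ 0) :
    (1 / (T / c + C₁)) *
        ((2 / c) * (C₂ * (T + c * C₁) ^ 2 + α₄ * (T + c * C₁) / c)
          - (α₄ / c) * (T / c + C₁)) =
      C₂ * (2 * (T + c * C₁)) + α₄ / c := by
  rw [div_add_eq_add_mul_div hc]
  field_simp
  ring

theorem reduced_system_rhs_w_eq (hW : T / c + C₁ ≠ 0) :
    (1 / (T / c + C₁)) * ((1 / c) * (T / c + C₁)) = 1 / c := by
  field_simp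

end Field

section Deriv

variable {𝕜 : Type*} [NontriviallyNormedField 𝕜] (c C₁ : 𝕜)

theorem hasDerivAt_quadratic_shift (C₂ α₄ T : 𝕜) :
    HasDerivAt (fun T : 𝕜 => C₂ * (T + c * C₁) ^ 2 + α₄ * (T + c * C₁) / c)
      (C₂ * (2 * (T + c * C₁)) + α₄ / c) T := by
  have hA : HasDerivAt (fun T : 𝕜 => T + c * C₁) 1 T := (hasDerivAt_id T).add_const _
  exact (((hA.pow 2).const_mul C₂).add ((hA.const_mul α₄).div_const c)).congr_deriv
    (by norm_num)

theorem hasDerivAt_div_add (T : 𝕜) : HasDerivAt (fun T : 𝕜 => T / c + C₁) (1 / c) T :=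
  ((hasDerivAt_id T).div_const c).add_const C₁

end Deriv

theorem pvi_reduced_system_solution_general (t0 α4 C1 C2 : ℂ) (ht0 : t0 ≠ 1)
    (U : Set ℂ)
    (h : ∀ T ∈ U, T + (t0 - 1) * C1 ≠ 0) :
    (∀ T ∈ U, T / (t0 - 1) + C1 ≠ 0) ∧
    ∀ T ∈ U,
      (HasDerivAt
        (fun T : ℂ => C2 * (T + (t0 - 1) * C1) ^ 2 + α4 * (T + (t0 - 1) * C1) / (t0 - 1))
        ((1 / (T / (t0 - 1) + C1)) *
          ((2 / (t0 - 1)) *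
              (C2 * (T + (t0 - 1) * C1) ^ 2 + α4 * (T + (t0 - 1) * C1) / (t0 - 1))
            - (α4 / (t0 - 1)) * (T / (t0 - 1) + C1))) T)
      ∧
      (HasDerivAt (fun T : ℂ => T / (t0 - 1) + C1)
        ((1 / (T / (t0 - 1) + C1)) * ((1 / (t0 - 1)) * (T / (t0 - 1) + C1))) T) := by
  have hc : t0 - 1 ≠ 0 := sub_ne_zero.mpr ht0
  have hW : ∀ T ∈ U, T / (t0 - 1) + C1 ≠ 0 := fun T hT => div_add_ne_zero hc (h T hT)
  refine ⟨hW, fun T hT => ⟨?_, ?_⟩⟩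
  · rw [reduced_system_rhs_z_eq C2 α4 hc (h T hT)]
    exact hasDerivAt_quadratic_shift _ _ _ _ _
  · rw [reduced_system_rhs_w_eq (hW T hT)]
    exact hasDerivAt_div_add _ _ _

/-- The explicit single-valued solution of the reduced constant-coefficient system
obtained from the Painlevé VI system at the accessible singular point `X = 0`:
`W(T) = T/(t0−1) + C1`, `Z(T) = C2·(T+(t0−1)C1)² + α4·(T+(t0−1)C1)/(t0−1)` satisfy
`dZ/dT = (1/W)·((2/(t0−1))·Z − (α4/(t0−1))·W)` and `dW/dT = (1/W)·((1/(t0−1))·W)`. -/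
theorem pvi_reduced_system_solution (t0 α4 C1 C2 : ℂ) (ht0 : t0 ≠ 1)
    (U : Set ℂ) (hU : IsOpen U)
    (h : ∀ T ∈ U, T + (t0 - 1) * C1 ≠ 0) :
    (∀ T ∈ U, T / (t0 - 1) + C1 ≠ 0) ∧
    ∀ T ∈ U,
      (HasDerivAt
        (fun T : ℂ => C2 * (T + (t0 - 1) * C1) ^ 2 + α4 * (T + (t0 - 1) * C1) / (t0 - 1))
        ((1 / (T / (t0 - 1) + C1)) *
          ((2 / (t0 - 1)) *
              (C2 * (T + (t0 - 1) * C1) ^ 2 + α4 * (T + (t0 - 1) * C1) / (t0 - 1))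
            - (α4 / (t0 - 1)) * (T / (t0 - 1) + C1))) T)
      ∧
      (HasDerivAt (fun T : ℂ => T / (t0 - 1) + C1)
        ((1 / (T / (t0 - 1) + C1)) * ((1 / (t0 - 1)) * (T / (t0 - 1) + C1))) T) :=
  pvi_reduced_system_solution_general t0 α4 C1 C2 ht0 U h
end

section
/- Let α2, a1,...,a10 ∈ ℂ, let U ⊆ ℂ be open, and let x, y : ℂ → ℂ be differentiable on U with x(t) ≠ 0 for t ∈ U, satisfying on U: dx/dt = a1x³y + a2x²y + (1/2)((3a1+2a3)α2−a4)x² + a5xy + ((a2+a9)α2−a6)x + a7y + a8 and dy/dt = a3x²y² + a9xy² + a10y² + a4xy + a6y + (1/2)(a1α2+a4)α2. Then the functions x1 := 1/x and y1 := −(x·y+α2)·x are differentiable on U and satisfy: dx1/dt = a7x1⁴y1 + a5x1³y1 + a2x1²y1 + a1x1y1 + α2a7x1³ + (α2a5−a8)x1² + (a6−α2a9)x1 − (1/2)α2(a1+2a3) + a4/2, and dy1/dt = −2a7x1³y1² − (2a5+a10)x1²y1² − 3α2a7x1²y1 − (2a2+a9)x1y1² − (2a1+a3)y1² − (α2(3a5+2a10)−2a8)x1y1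 − α2²a7x1 − (α2a2+a6)y1 − α2(α2(a5+a10)−a8). -/
/-!
The change of chart `(x, y) ↦ (1/x, -(x y + α₂) x)` is an involution on `{x ≠ 0}`: from
`y₁ = -(x y + α₂) x` one gets `y = -(x₁ y₁ + α₂) x₁`. Hence, by the chain rule, the transformed
vector field is obtained by substituting `x = 1/x₁`, `y = -(x₁ y₁ + α₂) x₁` into
`(-x'/x², -(x' y + x y') x - (x y + α₂) x')`, and the resulting rational functions turn out to be
polynomial in `(x₁, y₁)`.
-/

structure Sigma2Coeffs (K : Type*) where
  α2 : K
  a1 : K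
  a2 : K
  a3 : K
  a4 : K
  a5 : K
  a6 : K
  a7 : K
  a8 : K
  a9 : K
  a10 : K

namespace Sigma2Coeffs

variable {K : Type*} [Field K] [NeZero (2 : K)] (c : Sigma2Coeffs K)

def dx (x y : K) : K :=
  c.a1 * x ^ 3 * y + c.a2 * x ^ 2 * y
    + (1 / 2) * ((3 * c.a1 + 2 * c.a3) * c.α2 - c.a4) * x ^ 2 + c.a5 * x * y
    + ((c.a2 + c.a9) * c.α2 - c.a6) * x + c.a7 * y + c.a8

def dy (x y : K) : K :=
  c.a3 * x ^ 2 * y ^ 2 + c.a9 * x * y ^ 2 + c.a10 * y ^ 2 + c.a4 * x * y + c.a6 * y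
    + (1 / 2) * (c.a1 * c.α2 + c.a4) * c.α2

def dx1 (x1 y1 : K) : K :=
  c.a7 * x1 ^ 4 * y1 + c.a5 * x1 ^ 3 * y1 + c.a2 * x1 ^ 2 * y1 + c.a1 * x1 * y1
    + c.α2 * c.a7 * x1 ^ 3 + (c.α2 * c.a5 - c.a8) * x1 ^ 2 + (c.a6 - c.α2 * c.a9) * x1
    - (1 / 2) * c.α2 * (c.a1 + 2 * c.a3) + c.a4 / 2

def dy1 (x1 y1 : K) : K :=
  -(2 * c.a7) * x1 ^ 3 * y1 ^ 2 - (2 * c.a5 + c.a10) * x1 ^ 2 * y1 ^ 2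
    - 3 * c.α2 * c.a7 * x1 ^ 2 * y1 - (2 * c.a2 + c.a9) * x1 * y1 ^ 2
    - (2 * c.a1 + c.a3) * y1 ^ 2 - (c.α2 * (3 * c.a5 + 2 * c.a10) - 2 * c.a8) * x1 * y1
    - c.α2 ^ 2 * c.a7 * x1 - (c.α2 * c.a2 + c.a6) * y1 - c.α2 * (c.α2 * (c.a5 + c.a10) - c.a8)

theorem dx1_secondChart {x : K} (y : K) (hx : x ≠ 0) :
    c.dx1 (1 / x) (-(x * y + c.α2) * x) = -c.dx x y / x ^ 2 := by
  unfold dx1 dx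
  field_simp
  ring

theorem dy1_secondChart {x : K} (y : K) (hx : x ≠ 0) :
    c.dy1 (1 / x) (-(x * y + c.α2) * x) =
      -(c.dx x y * y + x * c.dy x y) * x + -(x * y + c.α2) * c.dx x y := by
  unfold dy1 dx dy
  field_simp
  ring

end Sigma2Coeffs

theorem HasDerivAt.one_div {𝕜 : Type*} [NontriviallyNormedField 𝕜] {f : 𝕜 → 𝕜} {f' t : 𝕜}
    (hf : HasDerivAt f f' t) (ht : f t ≠ 0) :
    HasDerivAt (fun s => 1 / f s) (-f' / f t ^ 2) t := by
  simpa only [_root_.one_div] using hf.fun_inv ht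

/-- Rewriting the general ten-parameter polynomial system on `Σ₂` in the second
coordinate chart `(x1, y1) = (1/x, −(xy+α2)x)` of the Hirzebruch surface: the
transformed functions are differentiable and satisfy the polynomial system (3.4). -/
theorem sigma2_system_in_second_chart (α2 a1 a2 a3 a4 a5 a6 a7 a8 a9 a10 : ℂ)
    (U : Set ℂ) (hU : IsOpen U)
    (x y : ℂ → ℂ) (hx : DifferentiableOn ℂ x U) (hy : DifferentiableOn ℂ y U)
    (hx0 : ∀ t ∈ U, x t ≠ 0)
    (heq : ∀ t ∈ U,
      (deriv x t = a1 * (x t) ^ 3 * y t + a2 * (x t) ^ 2 * y t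
        + (1 / 2) * ((3 * a1 + 2 * a3) * α2 - a4) * (x t) ^ 2 + a5 * x t * y t
        + ((a2 + a9) * α2 - a6) * x t + a7 * y t + a8)
      ∧
      (deriv y t = a3 * (x t) ^ 2 * (y t) ^ 2 + a9 * x t * (y t) ^ 2
        + a10 * (y t) ^ 2 + a4 * x t * y t + a6 * y t
        + (1 / 2) * (a1 * α2 + a4) * α2)) :
    DifferentiableOn ℂ (fun t => 1 / x t) U ∧
    DifferentiableOn ℂ (fun t => -(x t * y t + α2) * x t) U ∧
    ∀ t ∈ U,
      (deriv (fun t => 1 / x t) t =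
        a7 * (1 / x t) ^ 4 * (-(x t * y t + α2) * x t)
        + a5 * (1 / x t) ^ 3 * (-(x t * y t + α2) * x t)
        + a2 * (1 / x t) ^ 2 * (-(x t * y t + α2) * x t)
        + a1 * (1 / x t) * (-(x t * y t + α2) * x t)
        + α2 * a7 * (1 / x t) ^ 3
        + (α2 * a5 - a8) * (1 / x t) ^ 2
        + (a6 - α2 * a9) * (1 / x t)
        - (1 / 2) * α2 * (a1 + 2 * a3) + a4 / 2)
      ∧
      (deriv (fun t => -(x t * y t + α2) * x t) t =
        -(2 * a7) * (1 / x t) ^ 3 * (-(x t * y t + α2) * x t) ^ 2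
        - (2 * a5 + a10) * (1 / x t) ^ 2 * (-(x t * y t + α2) * x t) ^ 2
        - 3 * α2 * a7 * (1 / x t) ^ 2 * (-(x t * y t + α2) * x t)
        - (2 * a2 + a9) * (1 / x t) * (-(x t * y t + α2) * x t) ^ 2
        - (2 * a1 + a3) * (-(x t * y t + α2) * x t) ^ 2
        - (α2 * (3 * a5 + 2 * a10) - 2 * a8) * (1 / x t) * (-(x t * y t + α2) * x t)
        - α2 ^ 2 * a7 * (1 / x t)
        - (α2 * a2 + a6) * (-(x t * y t + α2) * x t)
        - α2 * (α2 * (a5 + a10) - a8)) := by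
  let c : Sigma2Coeffs ℂ := ⟨α2, a1, a2, a3, a4, a5, a6, a7, a8, a9, a10⟩
  refine ⟨(differentiableOn_const 1).div hx hx0, ((hx.mul hy).add_const α2).neg.mul hx,
    fun t ht => ?_⟩
  have hxt : HasDerivAt x (c.dx (x t) (y t)) t :=
    (hx.differentiableAt (hU.mem_nhds ht)).hasDerivAt.congr_deriv (heq t ht).1
  have hyt : HasDerivAt y (c.dy (x t) (y t)) t :=
    (hy.differentiableAt (hU.mem_nhds ht)).hasDerivAt.congr_deriv (heq t ht).2
  exact ⟨(hxt.one_div (hx0 t ht)).deriv.trans (c.dx1_secondChart (y t) (hx0 t ht)).symm,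
    (((hxt.mul hyt).add_const α2).neg.mul hxt).deriv.trans
      (c.dy1_secondChart (y t) (hx0 t ht)).symm⟩
end
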